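/- Let N be a positive integer. Let P, P̃, Q, B be constant N×N real matrices with P symmetric, P̃ symmetric and invertible, P P̃ = P̃ P, P Q = Q P, and Q + Qᵀ = B; set D = P̃⁻¹ Q and assume P D = D P. Let Ã : ℝ → Matrix(N,N,ℝ) be a continuous matrix-valued function with P̃ Ã(t) = Ã(t) P̃ for all t, and define A₁(t) = P⁻¹ Ã(t)/2 and A₂(t) = P⁻¹ Ã(t)ᵀ/2 (P assumed invertible). Suppose Φ : ℝ → ℝᴺ is differentiable and satisfies the semi-discrete scheme Φ'(t) + D ( A₁(t) Φ(t) ) + A₂(t) D Φ(t) = 0 for all t. Then for all t, (d/dt)( Φ(t)ᵀ P P̃ Φ(t) ) + Φ(t)ᵀ B Ã(t) Φ(t) = 0; i.e. the discrete energy ‖Φ‖²_{P P̃} only changes through the boundary term Φᵀ B Ã Φ, so the scheme is energy conserving. -/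

import Mathlib

/-!
Write `M = P P̃`, `D = P̃⁻¹ Q`. Since `M` is symmetric, the energy rate is `2 Φᵀ M Φ'`. The
commutation hypotheses collapse `M D (P⁻¹Ã)` to `Q Ã` and `M (P⁻¹Ãᵀ) D` to `Ãᵀ Q`, so
`Φᵀ M Φ' = -½ Φᵀ (Q Ã + Ãᵀ Q) Φ`, and `Φᵀ Ãᵀ Q Φ = Φᵀ Qᵀ Ã Φ` turns this into `-½ Φᵀ B Ã Φ`.
-/

open Matrix

theorem Matrix.IsSymm.mul_of_commute {n R : Type*} [Fintype n] [CommSemiring R]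
    {A B : Matrix n n R} (hA : A.IsSymm) (hB : B.IsSymm) (hAB : Commute A B) :
    (A * B).IsSymm := by
  rw [IsSymm, transpose_mul, hA.eq, hB.eq, hAB.eq]

section Calculus

variable {𝕜 : Type*} [NontriviallyNormedField 𝕜] {m n : Type*} [Fintype n]
  {u v : 𝕜 → n → 𝕜} {u' v' : n → 𝕜} {x : 𝕜}

theorem HasDerivAt.dotProduct (hu : HasDerivAt u u' x) (hv : HasDerivAt v v' x) :
    HasDerivAt (fun s => u s ⬝ᵥ v s) (u' ⬝ᵥ v x + u x ⬝ᵥ v') x := by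
  have h := HasDerivAt.fun_sum (u := Finset.univ) fun i _ =>
    (hasDerivAt_pi.1 hu i).mul (hasDerivAt_pi.1 hv i)
  simpa only [_root_.dotProduct, Pi.mul_apply, Finset.sum_add_distrib] using h

theorem HasDerivAt.const_mulVec (M : Matrix m n 𝕜) (hv : HasDerivAt v v' x) :
    HasDerivAt (fun s => M *ᵥ v s) (M *ᵥ v') x :=
  hasDerivAt_pi.2 fun i =>
    (hasDerivAt_const x (M i)).dotProduct hv |>.congr_deriv (by simp [mulVec])

theorem HasDerivAt.dotProduct_mulVec_self {M : Matrix n n 𝕜} (hM : M.IsSymm)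
    (hv : HasDerivAt v v' x) :
    HasDerivAt (fun s => v s ⬝ᵥ M *ᵥ v s) (2 * (v x ⬝ᵥ M *ᵥ v')) x := by
  refine (hv.dotProduct (hv.const_mulVec M)).congr_deriv ?_
  rw [← dotProduct_transpose_mulVec, hM.eq, two_mul]

end Calculus

section SkewSymmetricSBP

variable {n K : Type*} [Fintype n] [DecidableEq n] [Field K] {P Pt Q B A : Matrix n n K}

theorem sbp_energy_flux_eq_half_boundary (hPinv : IsUnit P.det) (hPtinv : IsUnit Pt.det)
    (hPtsymm : Pt.IsSymm) (hPPt : P * Pt = Pt * P) (hPQ : P * Q = Q * P) (hQB : Q + Qᵀ = B)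
    (hAPt : Pt * A = A * Pt) (v : n → K) :
    v ⬝ᵥ (P * Pt) *ᵥ ((Pt⁻¹ * Q) *ᵥ (((2 : K)⁻¹ • (P⁻¹ * A)) *ᵥ v)
      + ((2 : K)⁻¹ • (P⁻¹ * Aᵀ)) *ᵥ ((Pt⁻¹ * Q) *ᵥ v)) = 2⁻¹ * (v ⬝ᵥ (B * A) *ᵥ v) := by
  have hATPt : Pt * Aᵀ = Aᵀ * Pt := by
    simpa only [transpose_mul, hPtsymm.eq] using (congrArg transpose hAPt).symm
  have hflux : P * Pt * (Pt⁻¹ * Q * (P⁻¹ * A)) = Q * A := by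
    simp only [Matrix.mul_assoc, mul_nonsing_inv_cancel_left _ _ hPtinv]
    rw [← Matrix.mul_assoc, hPQ, Matrix.mul_assoc, mul_nonsing_inv_cancel_left _ _ hPinv]
  have hflux' : P * Pt * (P⁻¹ * Aᵀ * (Pt⁻¹ * Q)) = Aᵀ * Q := by
    rw [hPPt]
    simp only [Matrix.mul_assoc, mul_nonsing_inv_cancel_left _ _ hPinv]
    rw [← Matrix.mul_assoc, hATPt, Matrix.mul_assoc, mul_nonsing_inv_cancel_left _ _ hPtinv]
  have hswap : v ⬝ᵥ (Aᵀ * Q) *ᵥ v = v ⬝ᵥ (Qᵀ * A) *ᵥ v := by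
    rw [← dotProduct_transpose_mulVec, transpose_mul, transpose_transpose]
  simp only [mulVec_add, mulVec_mulVec, dotProduct_add]
  simp only [mul_smul_comm, smul_mul_assoc, hflux, hflux', smul_mulVec, dotProduct_smul,
    smul_eq_mul]
  rw [hswap, ← mul_add, ← dotProduct_add, ← add_mulVec, ← Matrix.add_mul, hQB]

end SkewSymmetricSBP

theorem stmt_16 (N : ℕ)
    (P Pt Q B : Matrix (Fin N) (Fin N) ℝ)
    (hPsymm : P.IsSymm) (hPinv : IsUnit P.det)
    (hPtsymm : Pt.IsSymm) (hPtinv : IsUnit Pt.det)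
    (hPPt : P * Pt = Pt * P) (hPQ : P * Q = Q * P)
    (hQB : Q + Qᵀ = B)
    (At : ℝ → Matrix (Fin N) (Fin N) ℝ)
    (hAtPt : ∀ t, Pt * At t = At t * Pt)
    (Φ : ℝ → Fin N → ℝ) (hΦ : Differentiable ℝ Φ)
    (hscheme : ∀ t,
      deriv Φ t
      + (Pt⁻¹ * Q).mulVec (((2 : ℝ)⁻¹ • (P⁻¹ * At t)).mulVec (Φ t))
      + ((2 : ℝ)⁻¹ • (P⁻¹ * (At t)ᵀ)).mulVec ((Pt⁻¹ * Q).mulVec (Φ t)) = 0) :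
    ∀ t, deriv (fun s => Φ s ⬝ᵥ (P * Pt).mulVec (Φ s)) t
      + Φ t ⬝ᵥ (B * At t).mulVec (Φ t) = 0 := by
  intro t
  have hrate := (hΦ t).hasDerivAt.dotProduct_mulVec_self (hPsymm.mul_of_commute hPtsymm hPPt)
  have hΦ' := eq_neg_of_add_eq_zero_left ((add_assoc _ _ _).symm.trans (hscheme t))
  rw [hrate.deriv, hΦ', mulVec_neg, dotProduct_neg,
    sbp_energy_flux_eq_half_boundary hPinv hPtinv hPtsymm hPPt hPQ hQB (hAtPt t)]
  ring
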